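/- Let ψ : (0,∞) → (0,∞) be a positive quasi-concave function and assume the limits μ_ψ = −lim_{n→∞} (1/n) log₂ M_ψ(2^(−n)), μ⁰_ψ = −lim_{n→∞} (1/n) log₂ M⁰_ψ(2^(−n)), and μ^∞_ψ = −lim_{n→∞} (1/n) log₂ M^∞_ψ(2^(−n)) exist. Then μ_ψ = min(μ⁰_ψ, μ^∞_ψ). -/
import Mathlib

open Filter Topology

/-- The dilation function `M_ψ(t) = sup_{s>0} ψ(ts)/ψ(s)`. -/
noncomputable def Mfull (ψ : ℝ → ℝ) (t : ℝ) : ℝ :=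
  sSup {r : ℝ | ∃ s : ℝ, 0 < s ∧ r = ψ (t * s) / ψ s}

/-- The partial dilation function `M⁰_ψ(t) = sup_{0<s≤min(1,1/t)} ψ(ts)/ψ(s)`. -/
noncomputable def Mzero (ψ : ℝ → ℝ) (t : ℝ) : ℝ :=
  sSup {r : ℝ | ∃ s : ℝ, 0 < s ∧ s ≤ min 1 (1 / t) ∧ r = ψ (t * s) / ψ s}

/-- The partial dilation function `M^∞_ψ(t) = sup_{s≥max(1,1/t)} ψ(ts)/ψ(s)`. -/
noncomputable def Minfty (ψ : ℝ → ℝ) (t : ℝ) : ℝ :=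
  sSup {r : ℝ | ∃ s : ℝ, max 1 (1 / t) ≤ s ∧ r = ψ (t * s) / ψ s}

section Aux

variable {ψ : ℝ → ℝ}

private lemma zeroMem {t s : ℝ} (hs : 0 < s) (h : s ≤ min 1 (1 / t)) :
    ψ (t * s) / ψ s ∈ {r : ℝ | ∃ s : ℝ, 0 < s ∧ s ≤ min 1 (1 / t) ∧ r = ψ (t * s) / ψ s} :=
  ⟨s, hs, h, rfl⟩

private lemma infMem {t s : ℝ} (h : max 1 (1 / t) ≤ s) :
    ψ (t * s) / ψ s ∈ {r : ℝ | ∃ s : ℝ, max 1 (1 / t) ≤ s ∧ r = ψ (t * s) / ψ s} :=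
  ⟨s, h, rfl⟩

private lemma fullMem {t s : ℝ} (hs : 0 < s) :
    ψ (t * s) / ψ s ∈ {r : ℝ | ∃ s : ℝ, 0 < s ∧ r = ψ (t * s) / ψ s} :=
  ⟨s, hs, rfl⟩

private lemma ratio_le_one (hψ : ∀ x > 0, 0 < ψ x) (hmono : MonotoneOn ψ (Set.Ioi 0))
    {t s : ℝ} (ht : 0 < t) (ht1 : t ≤ 1) (hs : 0 < s) : ψ (t * s) / ψ s ≤ 1 := by
  have hts : 0 < t * s := mul_pos ht hs
  have h := hmono (Set.mem_Ioi.mpr hts) (Set.mem_Ioi.mpr hs) (by nlinarith)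
  exact (div_le_one (hψ s hs)).mpr h

private lemma fullBdd (hψ : ∀ x > 0, 0 < ψ x) (hmono : MonotoneOn ψ (Set.Ioi 0))
    {t : ℝ} (ht : 0 < t) (ht1 : t ≤ 1) :
    BddAbove {r : ℝ | ∃ s : ℝ, 0 < s ∧ r = ψ (t * s) / ψ s} := by
  refine ⟨1, ?_⟩
  rintro r ⟨s, hs, rfl⟩
  exact ratio_le_one hψ hmono ht ht1 hs

private lemma zeroBdd (hψ : ∀ x > 0, 0 < ψ x) (hmono : MonotoneOn ψ (Set.Ioi 0))
    {t : ℝ} (ht : 0 < t) (ht1 : t ≤ 1) :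
    BddAbove {r : ℝ | ∃ s : ℝ, 0 < s ∧ s ≤ min 1 (1 / t) ∧ r = ψ (t * s) / ψ s} := by
  refine ⟨1, ?_⟩
  rintro r ⟨s, hs, _, rfl⟩
  exact ratio_le_one hψ hmono ht ht1 hs

private lemma infBdd (hψ : ∀ x > 0, 0 < ψ x) (hmono : MonotoneOn ψ (Set.Ioi 0))
    {t : ℝ} (ht : 0 < t) (ht1 : t ≤ 1) :
    BddAbove {r : ℝ | ∃ s : ℝ, max 1 (1 / t) ≤ s ∧ r = ψ (t * s) / ψ s} := by
  refine ⟨1, ?_⟩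
  rintro r ⟨s, hs, rfl⟩
  have hs0 : 0 < s := lt_of_lt_of_le one_pos ((le_max_left _ _).trans hs)
  exact ratio_le_one hψ hmono ht ht1 hs0

private lemma Mzero_lower (hψ : ∀ x > 0, 0 < ψ x) (hmono : MonotoneOn ψ (Set.Ioi 0))
    (hqc : AntitoneOn (fun t => ψ t / t) (Set.Ioi 0))
    {t : ℝ} (ht : 0 < t) (ht1 : t ≤ 1) : t ≤ Mzero ψ t := by
  refine le_csSup_of_le (zeroBdd hψ hmono ht ht1)
    (zeroMem one_pos (le_min le_rfl (one_le_one_div ht ht1))) ?_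
  rw [mul_one, le_div_iff₀ (hψ 1 one_pos)]
  have h : ψ 1 ≤ ψ t / t := by
    simpa using hqc (Set.mem_Ioi.mpr ht) (Set.mem_Ioi.mpr one_pos) ht1
  have h2 : ψ 1 * t ≤ ψ t := (le_div_iff₀ ht).mp h
  nlinarith

private lemma Minfty_lower (hψ : ∀ x > 0, 0 < ψ x) (hmono : MonotoneOn ψ (Set.Ioi 0))
    (hqc : AntitoneOn (fun t => ψ t / t) (Set.Ioi 0))
    {t : ℝ} (ht : 0 < t) (ht1 : t ≤ 1) : t ≤ Minfty ψ t := by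
  have hinv : (0:ℝ) < 1 / t := by positivity
  refine le_csSup_of_le (infBdd hψ hmono ht ht1)
    (infMem (max_le (one_le_one_div ht ht1) le_rfl)) ?_
  have htt : t * (1 / t) = 1 := by field_simp
  rw [htt, le_div_iff₀ (hψ _ hinv)]
  have h : ψ (1 / t) / (1 / t) ≤ ψ 1 := by
    simpa using hqc (Set.mem_Ioi.mpr one_pos) (Set.mem_Ioi.mpr hinv) (one_le_one_div ht ht1)
  rw [div_eq_mul_inv, one_div, inv_inv] at h
  rw [one_div, mul_comm]
  exact h

private lemma Mfull_lower (hψ : ∀ x > 0, 0 < ψ x) (hmono : MonotoneOn ψ (Set.Ioi 0))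
    (hqc : AntitoneOn (fun t => ψ t / t) (Set.Ioi 0))
    {t : ℝ} (ht : 0 < t) (ht1 : t ≤ 1) : t ≤ Mfull ψ t := by
  refine le_csSup_of_le (fullBdd hψ hmono ht ht1) (fullMem one_pos) ?_
  rw [mul_one, le_div_iff₀ (hψ 1 one_pos)]
  have h : ψ 1 ≤ ψ t / t := by
    simpa using hqc (Set.mem_Ioi.mpr ht) (Set.mem_Ioi.mpr one_pos) ht1
  have h2 : ψ 1 * t ≤ ψ t := (le_div_iff₀ ht).mp h
  nlinarith

private lemma Mzero_le_one (hψ : ∀ x > 0, 0 < ψ x) (hmono : MonotoneOn ψ (Set.Ioi 0))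
    {t : ℝ} (ht : 0 < t) (ht1 : t ≤ 1) : Mzero ψ t ≤ 1 := by
  refine csSup_le ⟨_, zeroMem one_pos (le_min le_rfl (one_le_one_div ht ht1))⟩ ?_
  rintro r ⟨s, hs, _, rfl⟩
  exact ratio_le_one hψ hmono ht ht1 hs

private lemma Minfty_le_one (hψ : ∀ x > 0, 0 < ψ x) (hmono : MonotoneOn ψ (Set.Ioi 0))
    {t : ℝ} (ht : 0 < t) (ht1 : t ≤ 1) : Minfty ψ t ≤ 1 := by
  refine csSup_le ⟨_, infMem (max_le (one_le_one_div ht ht1) le_rfl)⟩ ?_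
  rintro r ⟨s, hs, rfl⟩
  have hs0 : 0 < s := lt_of_lt_of_le one_pos ((le_max_left _ _).trans hs)
  exact ratio_le_one hψ hmono ht ht1 hs0

private lemma Mzero_mono (hψ : ∀ x > 0, 0 < ψ x) (hmono : MonotoneOn ψ (Set.Ioi 0))
    {t t' : ℝ} (ht : 0 < t) (htt' : t ≤ t') (ht'1 : t' ≤ 1) : Mzero ψ t ≤ Mzero ψ t' := by
  have ht' : 0 < t' := lt_of_lt_of_le ht htt'
  have ht1 : t ≤ 1 := htt'.trans ht'1
  refine csSup_le ⟨_, zeroMem one_pos (le_min le_rfl (one_le_one_div ht ht1))⟩ ?_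
  rintro r ⟨s, hs, hs1, rfl⟩
  have hsle1 : s ≤ 1 := hs1.trans (min_le_left _ _)
  refine le_csSup_of_le (zeroBdd hψ hmono ht' ht'1)
    (zeroMem hs (le_min hsle1 (hsle1.trans (one_le_one_div ht' ht'1)))) ?_
  exact (div_le_div_iff_of_pos_right (hψ s hs)).mpr
    (hmono (Set.mem_Ioi.mpr (mul_pos ht hs)) (Set.mem_Ioi.mpr (mul_pos ht' hs))
      (mul_le_mul_of_nonneg_right htt' hs.le))

private lemma Minfty_mono (hψ : ∀ x > 0, 0 < ψ x) (hmono : MonotoneOn ψ (Set.Ioi 0))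
    {t t' : ℝ} (ht : 0 < t) (htt' : t ≤ t') (ht'1 : t' ≤ 1) : Minfty ψ t ≤ Minfty ψ t' := by
  have ht' : 0 < t' := lt_of_lt_of_le ht htt'
  have ht1 : t ≤ 1 := htt'.trans ht'1
  refine csSup_le ⟨_, infMem (max_le (one_le_one_div ht ht1) le_rfl)⟩ ?_
  rintro r ⟨s, hs, rfl⟩
  have hs0 : 0 < s := lt_of_lt_of_le one_pos ((le_max_left _ _).trans hs)
  have hmax : max 1 (1 / t') ≤ s :=
    max_le ((le_max_left _ _).trans hs)
      ((one_div_le_one_div_of_le ht htt').trans ((le_max_right _ _).trans hs))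
  refine le_csSup_of_le (infBdd hψ hmono ht' ht'1) (infMem hmax) ?_
  exact (div_le_div_iff_of_pos_right (hψ s hs0)).mpr
    (hmono (Set.mem_Ioi.mpr (mul_pos ht hs0)) (Set.mem_Ioi.mpr (mul_pos ht' hs0))
      (mul_le_mul_of_nonneg_right htt' hs0.le))

private lemma Mzero_le_Mfull (hψ : ∀ x > 0, 0 < ψ x) (hmono : MonotoneOn ψ (Set.Ioi 0))
    {t : ℝ} (ht : 0 < t) (ht1 : t ≤ 1) : Mzero ψ t ≤ Mfull ψ t := by
  refine csSup_le ⟨_, zeroMem one_pos (le_min le_rfl (one_le_one_div ht ht1))⟩ ?_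
  rintro r ⟨s, hs, _, rfl⟩
  exact le_csSup (fullBdd hψ hmono ht ht1) (fullMem hs)

private lemma Minfty_le_Mfull (hψ : ∀ x > 0, 0 < ψ x) (hmono : MonotoneOn ψ (Set.Ioi 0))
    {t : ℝ} (ht : 0 < t) (ht1 : t ≤ 1) : Minfty ψ t ≤ Mfull ψ t := by
  refine csSup_le ⟨_, infMem (max_le (one_le_one_div ht ht1) le_rfl)⟩ ?_
  rintro r ⟨s, hs, rfl⟩
  have hs0 : 0 < s := lt_of_lt_of_le one_pos ((le_max_left _ _).trans hs)
  exact le_csSup (fullBdd hψ hmono ht ht1) (fullMem hs0)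

end Aux

section Key

variable {ψ : ℝ → ℝ}

private lemma Tpos (i : ℕ) : (0:ℝ) < ((2:ℝ) ^ i)⁻¹ := by positivity

private lemma Tle1 (i : ℕ) : ((2:ℝ) ^ i)⁻¹ ≤ 1 := by
  rw [inv_le_one_iff₀]
  right
  exact one_le_pow₀ one_le_two

private lemma Tanti {i j : ℕ} (h : i ≤ j) : ((2:ℝ) ^ j)⁻¹ ≤ ((2:ℝ) ^ i)⁻¹ := by
  apply inv_anti₀ (by positivity)
  exact pow_le_pow_right₀ one_le_two h

private lemma key (hψ : ∀ x > 0, 0 < ψ x) (hmono : MonotoneOn ψ (Set.Ioi 0))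
    (hqc : AntitoneOn (fun t => ψ t / t) (Set.Ioi 0)) (n : ℕ) (hn : 1 ≤ n) :
    ∃ k < n, Mfull ψ (((2:ℝ) ^ n)⁻¹) ≤
      Mzero ψ (((2:ℝ) ^ (n - 1 - k))⁻¹) * Minfty ψ (((2:ℝ) ^ k)⁻¹) := by
  set t : ℝ := ((2:ℝ) ^ n)⁻¹ with htdef
  have ht : 0 < t := Tpos n
  have ht1 : t ≤ 1 := Tle1 n
  set f : ℕ → ℝ := fun k => Mzero ψ (((2:ℝ) ^ (n - 1 - k))⁻¹) * Minfty ψ (((2:ℝ) ^ k)⁻¹)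
    with hfdef
  have hne : (Finset.range n).Nonempty := Finset.nonempty_range_iff.mpr (by omega)
  have hMf_pos : ∀ i : ℕ, 0 < Mzero ψ (((2:ℝ) ^ i)⁻¹) :=
    fun i => lt_of_lt_of_le (Tpos i) (Mzero_lower hψ hmono hqc (Tpos i) (Tle1 i))
  have hMi_pos : ∀ i : ℕ, 0 < Minfty ψ (((2:ℝ) ^ i)⁻¹) :=
    fun i => lt_of_lt_of_le (Tpos i) (Minfty_lower hψ hmono hqc (Tpos i) (Tle1 i))
  have hMz1 : (1:ℝ) ≤ Mzero ψ (((2:ℝ) ^ 0)⁻¹) := by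
    simpa using Mzero_lower hψ hmono hqc (Tpos 0) (Tle1 0)
  have hMi1 : (1:ℝ) ≤ Minfty ψ (((2:ℝ) ^ 0)⁻¹) := by
    simpa using Minfty_lower hψ hmono hqc (Tpos 0) (Tle1 0)
  have hsup : Mfull ψ t ≤ (Finset.range n).sup' hne f := by
    refine csSup_le ⟨_, fullMem (ψ := ψ) (t := t) one_pos⟩ ?_
    rintro r ⟨s, hs, rfl⟩
    rcases le_or_gt s 1 with hA | hA
    · -- s ≤ 1 : use k = 0
      have h1 : ψ (t * s) / ψ s ≤ Mzero ψ t :=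
        le_csSup (zeroBdd hψ hmono ht ht1)
          (zeroMem hs (le_min hA (hA.trans (one_le_one_div ht ht1))))
      have h2 : Mzero ψ t ≤ Mzero ψ (((2:ℝ) ^ (n - 1 - 0))⁻¹) :=
        Mzero_mono hψ hmono ht (Tanti (by omega)) (Tle1 _)
      have h3 : Mzero ψ (((2:ℝ) ^ (n - 1 - 0))⁻¹) ≤ f 0 := by
        simp only [hfdef]
        exact le_mul_of_one_le_right (hMf_pos _).le (by simpa using hMi1)
      exact le_trans (le_trans (h1.trans h2) h3) (Finset.le_sup' f (Finset.mem_range.mpr hn))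
    · rcases le_or_gt ((2:ℝ) ^ n) s with hB | hB
      · -- s ≥ 2^n : use k = n - 1
        have hmax : max 1 (1 / t) ≤ s := by
          rw [htdef, one_div, inv_inv]
          exact max_le ((one_le_pow₀ one_le_two).trans hB) hB
        have h1 : ψ (t * s) / ψ s ≤ Minfty ψ t :=
          le_csSup (infBdd hψ hmono ht ht1) (infMem hmax)
        have h2 : Minfty ψ t ≤ Minfty ψ (((2:ℝ) ^ (n - 1))⁻¹) :=
          Minfty_mono hψ hmono ht (Tanti (by omega)) (Tle1 _)
        have h3 : Minfty ψ (((2:ℝ) ^ (n - 1))⁻¹) ≤ f (n - 1) := by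
          simp only [hfdef]
          have h0 : n - 1 - (n - 1) = 0 := by omega
          rw [h0]
          exact le_mul_of_one_le_left (hMi_pos _).le hMz1
        exact le_trans (le_trans (h1.trans h2) h3)
          (Finset.le_sup' f (Finset.mem_range.mpr (by omega)))
      · -- 1 < s < 2^n
        set k : ℕ := Nat.log 2 ⌊s⌋₊ with hkdef
        have hfl1 : 1 ≤ ⌊s⌋₊ := Nat.le_floor (by exact_mod_cast hA.le)
        have h2k_le : (2:ℝ) ^ k ≤ s := by
          calc (2:ℝ) ^ k = ((2 ^ k : ℕ) : ℝ) := by push_cast; ring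
            _ ≤ (⌊s⌋₊ : ℝ) := by
                exact_mod_cast Nat.pow_log_le_self 2 (by omega)
            _ ≤ s := Nat.floor_le (by linarith)
        have hs_lt : s < (2:ℝ) ^ (k + 1) := by
          have h1 : ⌊s⌋₊ < 2 ^ (k + 1) := Nat.lt_pow_succ_log_self (by norm_num) _
          have h2 : s < (⌊s⌋₊ : ℝ) + 1 := Nat.lt_floor_add_one s
          have h3 : ((⌊s⌋₊ : ℕ) : ℝ) + 1 ≤ ((2 ^ (k + 1) : ℕ) : ℝ) := by
            exact_mod_cast h1
          calc s < (⌊s⌋₊ : ℝ) + 1 := h2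
            _ ≤ ((2 ^ (k + 1) : ℕ) : ℝ) := h3
            _ = (2:ℝ) ^ (k + 1) := by push_cast; ring
        have hk_lt : k < n := by
          by_contra hcon
          push_neg at hcon
          have : (2:ℝ) ^ n ≤ (2:ℝ) ^ k := pow_le_pow_right₀ one_le_two hcon
          linarith
        have hkn : k + 1 ≤ n := hk_lt
        set j : ℕ := n - 1 - k with hjdef
        have hpow : (2:ℝ) ^ n = 2 ^ (k + 1) * 2 ^ j := by
          rw [← pow_add]
          congr 1
          omega
        have htj : (0:ℝ) < ((2:ℝ) ^ j)⁻¹ := Tpos j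
        have htk : (0:ℝ) < ((2:ℝ) ^ k)⁻¹ := Tpos k
        -- split the ratio
        have hψ1 : 0 < ψ 1 := hψ 1 one_pos
        have hψs : 0 < ψ s := hψ s (by linarith)
        have hsplit : ψ (t * s) / ψ s = (ψ (t * s) / ψ 1) * (ψ 1 / ψ s) := by
          field_simp
        -- first factor
        have hts_le : t * s ≤ ((2:ℝ) ^ j)⁻¹ := by
          rw [htdef]
          rw [hpow]
          have hP : (0:ℝ) < (2:ℝ) ^ (k + 1) := by positivity
          have hQ : (0:ℝ) < (2:ℝ) ^ j := by positivity
          rw [mul_inv, mul_comm, ← mul_assoc]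
          calc s * ((2:ℝ) ^ (k + 1))⁻¹ * ((2:ℝ) ^ j)⁻¹
              ≤ 1 * ((2:ℝ) ^ j)⁻¹ := by
                apply mul_le_mul_of_nonneg_right _ (by positivity)
                rw [mul_inv_le_iff₀ hP, one_mul]
                exact hs_lt.le
            _ = ((2:ℝ) ^ j)⁻¹ := one_mul _
        have hF1 : ψ (t * s) / ψ 1 ≤ Mzero ψ (((2:ℝ) ^ j)⁻¹) := by
          refine le_csSup_of_le (zeroBdd hψ hmono htj (Tle1 j))
            (zeroMem one_pos (le_min le_rfl (one_le_one_div htj (Tle1 j)))) ?_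
          refine (div_le_div_iff_of_pos_right hψ1).mpr ?_
          rw [mul_one]
          exact hmono (Set.mem_Ioi.mpr (mul_pos ht (by linarith)))
            (Set.mem_Ioi.mpr htj) hts_le
        -- second factor
        have hone_le : (1:ℝ) ≤ ((2:ℝ) ^ k)⁻¹ * s := by
          have := mul_le_mul_of_nonneg_left h2k_le htk.le
          rwa [inv_mul_cancel₀ (by positivity : ((2:ℝ) ^ k) ≠ 0)] at this
        have hmaxk : max 1 (1 / ((2:ℝ) ^ k)⁻¹) ≤ s := by
          rw [one_div, inv_inv]
          exact max_le ((one_le_pow₀ one_le_two).trans h2k_le) h2k_le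
        have hF2 : ψ 1 / ψ s ≤ Minfty ψ (((2:ℝ) ^ k)⁻¹) := by
          refine le_csSup_of_le (infBdd hψ hmono htk (Tle1 k)) (infMem hmaxk) ?_
          refine (div_le_div_iff_of_pos_right hψs).mpr ?_
          exact hmono (Set.mem_Ioi.mpr one_pos)
            (Set.mem_Ioi.mpr (mul_pos htk (by linarith))) hone_le
        have hcomb : ψ (t * s) / ψ s ≤ f k := by
          rw [hsplit]
          simp only [hfdef]
          exact mul_le_mul hF1 hF2 (div_nonneg hψ1.le hψs.le) (hMf_pos j).le
        exact le_trans hcomb (Finset.le_sup' f (Finset.mem_range.mpr hk_lt))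
  obtain ⟨k, hk, heq⟩ := Finset.exists_mem_eq_sup' hne f
  exact ⟨k, Finset.mem_range.mp hk, hsup.trans_eq heq⟩

end Key

/-- Lemma 3.1 (lower indices): for a positive quasi-concave function ψ on (0,∞),
if the lower dilation indices μ_ψ, μ⁰_ψ, μ^∞_ψ exist (as the limits
μ = −lim (1/n) log₂ M(2^{−n}) etc.), then μ_ψ = min(μ⁰_ψ, μ^∞_ψ). -/
theorem stmt3 (ψ : ℝ → ℝ) (hψ : ∀ x > 0, 0 < ψ x)
    (hmono : MonotoneOn ψ (Set.Ioi 0))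
    (hqc : AntitoneOn (fun t => ψ t / t) (Set.Ioi 0))
    (μ μzero μinf : ℝ)
    (hmu : Tendsto (fun n : ℕ => (1 / (n : ℝ)) * Real.logb 2 (Mfull ψ ((2 : ℝ) ^ (-(n : ℤ)))))
      atTop (𝓝 (-μ)))
    (hmuzero : Tendsto (fun n : ℕ => (1 / (n : ℝ)) * Real.logb 2 (Mzero ψ ((2 : ℝ) ^ (-(n : ℤ)))))
      atTop (𝓝 (-μzero)))
    (hmuinf : Tendsto (fun n : ℕ => (1 / (n : ℝ)) * Real.logb 2 (Minfty ψ ((2 : ℝ) ^ (-(n : ℤ)))))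
      atTop (𝓝 (-μinf))) :
    μ = min μzero μinf := by
  have h2 : ∀ n : ℕ, (2:ℝ) ^ (-(n:ℤ)) = ((2:ℝ) ^ n)⁻¹ := by
    intro n; rw [zpow_neg, zpow_natCast]
  simp only [h2] at hmu hmuzero hmuinf
  have hMz_pos : ∀ i : ℕ, 0 < Mzero ψ (((2:ℝ) ^ i)⁻¹) :=
    fun i => lt_of_lt_of_le (Tpos i) (Mzero_lower hψ hmono hqc (Tpos i) (Tle1 i))
  have hMi_pos : ∀ i : ℕ, 0 < Minfty ψ (((2:ℝ) ^ i)⁻¹) :=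
    fun i => lt_of_lt_of_le (Tpos i) (Minfty_lower hψ hmono hqc (Tpos i) (Tle1 i))
  have hMf_pos : ∀ i : ℕ, 0 < Mfull ψ (((2:ℝ) ^ i)⁻¹) :=
    fun i => lt_of_lt_of_le (Tpos i) (Mfull_lower hψ hmono hqc (Tpos i) (Tle1 i))
  have hMz_le1 : ∀ i : ℕ, Mzero ψ (((2:ℝ) ^ i)⁻¹) ≤ 1 :=
    fun i => Mzero_le_one hψ hmono (Tpos i) (Tle1 i)
  have hMi_le1 : ∀ i : ℕ, Minfty ψ (((2:ℝ) ^ i)⁻¹) ≤ 1 :=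
    fun i => Minfty_le_one hψ hmono (Tpos i) (Tle1 i)
  -- direction 1 : μ ≤ μzero and μ ≤ μinf
  have hd1z : ∀ n : ℕ, (1/(n:ℝ)) * Real.logb 2 (Mzero ψ (((2:ℝ) ^ n)⁻¹)) ≤
      (1/(n:ℝ)) * Real.logb 2 (Mfull ψ (((2:ℝ) ^ n)⁻¹)) := by
    intro n
    refine mul_le_mul_of_nonneg_left ?_ (by positivity)
    exact (Real.logb_le_logb one_lt_two (hMz_pos n) (hMf_pos n)).mpr
      (Mzero_le_Mfull hψ hmono (Tpos n) (Tle1 n))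
  have hd1i : ∀ n : ℕ, (1/(n:ℝ)) * Real.logb 2 (Minfty ψ (((2:ℝ) ^ n)⁻¹)) ≤
      (1/(n:ℝ)) * Real.logb 2 (Mfull ψ (((2:ℝ) ^ n)⁻¹)) := by
    intro n
    refine mul_le_mul_of_nonneg_left ?_ (by positivity)
    exact (Real.logb_le_logb one_lt_two (hMi_pos n) (hMf_pos n)).mpr
      (Minfty_le_Mfull hψ hmono (Tpos n) (Tle1 n))
  have hz : -μzero ≤ -μ := le_of_tendsto_of_tendsto' hmuzero hmu hd1z
  have hi : -μinf ≤ -μ := le_of_tendsto_of_tendsto' hmuinf hmu hd1i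
  -- nonnegativity of μzero, μinf
  have hz0 : -μzero ≤ 0 := by
    refine le_of_tendsto hmuzero (Eventually.of_forall fun n => ?_)
    have hl := Real.logb_nonpos one_lt_two (hMz_pos n).le (hMz_le1 n)
    exact mul_nonpos_iff.mpr (Or.inl ⟨by positivity, hl⟩)
  have hi0 : -μinf ≤ 0 := by
    refine le_of_tendsto hmuinf (Eventually.of_forall fun n => ?_)
    have hl := Real.logb_nonpos one_lt_two (hMi_pos n).le (hMi_le1 n)
    exact mul_nonpos_iff.mpr (Or.inl ⟨by positivity, hl⟩)
  set m := min μzero μinf with hmdef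
  have hm0 : 0 ≤ m := le_min (by linarith) (by linarith)
  have hmz : m ≤ μzero := min_le_left _ _
  have hmi : m ≤ μinf := min_le_right _ _
  -- direction 2 : m ≤ μ
  have hd2 : -μ ≤ -m := by
    refine le_of_forall_pos_le_add fun ε hε => ?_
    obtain ⟨N₀, hN₀⟩ := eventually_atTop.mp
      (hmuzero.eventually_lt_const (show -μzero < -μzero + ε/2 by linarith))
    obtain ⟨N₁, hN₁⟩ := eventually_atTop.mp
      (hmuinf.eventually_lt_const (show -μinf < -μinf + ε/2 by linarith))
    have Hb : ∀ j : ℕ, Real.logb 2 (Mzero ψ (((2:ℝ) ^ j)⁻¹)) ≤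
        -(j:ℝ)*m + ε/2*(j:ℝ) + (N₀:ℝ)*m := by
      intro j
      have hlog0 : Real.logb 2 (Mzero ψ (((2:ℝ) ^ j)⁻¹)) ≤ 0 :=
        Real.logb_nonpos one_lt_two (hMz_pos j).le (hMz_le1 j)
      rcases lt_or_ge j N₀ with h | h
      · have hjN : (j:ℝ) ≤ N₀ := by exact_mod_cast h.le
        have hj0 : (0:ℝ) ≤ j := Nat.cast_nonneg j
        nlinarith
      · rcases Nat.eq_zero_or_pos j with rfl | hj
        · have hN00 : N₀ = 0 := by omega
          subst hN00
          push_cast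
          linarith
        · have hj' : (0:ℝ) < j := by exact_mod_cast hj
          have hup := (hN₀ j h).le
          have h3 : Real.logb 2 (Mzero ψ (((2:ℝ) ^ j)⁻¹)) ≤ (j:ℝ) * (-μzero + ε/2) := by
            have h4 : Real.logb 2 (Mzero ψ (((2:ℝ) ^ j)⁻¹)) =
                (j:ℝ) * ((1/(j:ℝ)) * Real.logb 2 (Mzero ψ (((2:ℝ) ^ j)⁻¹))) := by
              field_simp
            rw [h4]
            exact mul_le_mul_of_nonneg_left hup hj'.le
          have hNN : (0:ℝ) ≤ (N₀:ℝ) := Nat.cast_nonneg _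
          nlinarith [mul_le_mul_of_nonneg_left hmz hj'.le, mul_nonneg hNN hm0]
    have Hc : ∀ j : ℕ, Real.logb 2 (Minfty ψ (((2:ℝ) ^ j)⁻¹)) ≤
        -(j:ℝ)*m + ε/2*(j:ℝ) + (N₁:ℝ)*m := by
      intro j
      have hlog0 : Real.logb 2 (Minfty ψ (((2:ℝ) ^ j)⁻¹)) ≤ 0 :=
        Real.logb_nonpos one_lt_two (hMi_pos j).le (hMi_le1 j)
      rcases lt_or_ge j N₁ with h | h
      · have hjN : (j:ℝ) ≤ N₁ := by exact_mod_cast h.le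
        have hj0 : (0:ℝ) ≤ j := Nat.cast_nonneg j
        nlinarith
      · rcases Nat.eq_zero_or_pos j with rfl | hj
        · have hN00 : N₁ = 0 := by omega
          subst hN00
          push_cast
          linarith
        · have hj' : (0:ℝ) < j := by exact_mod_cast hj
          have hup := (hN₁ j h).le
          have h3 : Real.logb 2 (Minfty ψ (((2:ℝ) ^ j)⁻¹)) ≤ (j:ℝ) * (-μinf + ε/2) := by
            have h4 : Real.logb 2 (Minfty ψ (((2:ℝ) ^ j)⁻¹)) =
                (j:ℝ) * ((1/(j:ℝ)) * Real.logb 2 (Minfty ψ (((2:ℝ) ^ j)⁻¹))) := by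
              field_simp
            rw [h4]
            exact mul_le_mul_of_nonneg_left hup hj'.le
          have hNN : (0:ℝ) ≤ (N₁:ℝ) := Nat.cast_nonneg _
          nlinarith [mul_le_mul_of_nonneg_left hmi hj'.le, mul_nonneg hNN hm0]
    obtain ⟨N₂, hN₂⟩ := exists_nat_ge ((m + (N₀:ℝ)*m + (N₁:ℝ)*m)/(ε/2))
    refine le_of_tendsto hmu (eventually_atTop.mpr ⟨max N₂ 1, fun n hn => ?_⟩)
    have hn1 : 1 ≤ n := le_trans (le_max_right _ _) hn
    have hnN2 : N₂ ≤ n := le_trans (le_max_left _ _) hn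
    have hnpos : (0:ℝ) < n := by exact_mod_cast Nat.cast_pos.mpr hn1
    obtain ⟨k, hk, hkey⟩ := key hψ hmono hqc n hn1
    have hprodpos : 0 < Mzero ψ (((2:ℝ) ^ (n-1-k))⁻¹) * Minfty ψ (((2:ℝ) ^ k)⁻¹) :=
      mul_pos (hMz_pos _) (hMi_pos _)
    have hlog1 : Real.logb 2 (Mfull ψ (((2:ℝ) ^ n)⁻¹)) ≤
        Real.logb 2 (Mzero ψ (((2:ℝ) ^ (n-1-k))⁻¹) * Minfty ψ (((2:ℝ) ^ k)⁻¹)) :=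
      (Real.logb_le_logb one_lt_two (hMf_pos n) hprodpos).mpr hkey
    rw [Real.logb_mul (hMz_pos _).ne' (hMi_pos _).ne'] at hlog1
    have hcast : ((n - 1 - k : ℕ):ℝ) = (n:ℝ) - 1 - (k:ℝ) := by
      have h1 : k ≤ n - 1 := by omega
      rw [Nat.cast_sub h1, Nat.cast_sub hn1]
      push_cast
      ring
    have hBj := Hb (n - 1 - k)
    rw [hcast] at hBj
    have hCk := Hc k
    have hA : Real.logb 2 (Mfull ψ (((2:ℝ) ^ n)⁻¹)) ≤
        -((n:ℝ)-1)*m + ε/2*((n:ℝ)-1) + (N₀:ℝ)*m + (N₁:ℝ)*m := by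
      linarith [hlog1, hBj, hCk]
    have hsum : m + (N₀:ℝ)*m + (N₁:ℝ)*m ≤ ε/2*((n:ℝ)+1) := by
      have h5 : m + (N₀:ℝ)*m + (N₁:ℝ)*m ≤ (N₂:ℝ) * (ε/2) := by
        rw [div_le_iff₀ (by linarith : (0:ℝ) < ε/2)] at hN₂
        linarith
      have h6 : (N₂:ℝ) ≤ n := by exact_mod_cast hnN2
      have h8 : (N₂:ℝ) * (ε/2) ≤ ((n:ℝ)+1) * (ε/2) :=
        mul_le_mul_of_nonneg_right (by linarith) (by linarith)
      linarith
    have h7 : Real.logb 2 (Mfull ψ (((2:ℝ) ^ n)⁻¹)) ≤ (n:ℝ) * (-m + ε) := by nlinarith [hA, hsum]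
    calc (1/(n:ℝ)) * Real.logb 2 (Mfull ψ (((2:ℝ) ^ n)⁻¹))
        ≤ (1/(n:ℝ)) * ((n:ℝ)*(-m+ε)) := mul_le_mul_of_nonneg_left h7 (by positivity)
      _ = -m + ε := by field_simp
  have hu : μ ≤ m := le_min (by linarith) (by linarith)
  have hl : m ≤ μ := by linarith
  exact le_antisymm hu hl
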